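/- Let M be a finitely ranked m-monoid. Then the set of ω-finite dimensional elements equals the set of finite dimensional elements: M_ωFin = M_Fin. -/

import Mathlib

universe u

open scoped Classical

/-- A finite permutation of ω: an element of S_ω, i.e. a permutation moving
only finitely many points. -/
def FinPerm (σ : Equiv.Perm ℕ) : Prop := {n : ℕ | σ n ≠ n}.Finite

/-- The raw operations of a merge algebra: the binary merges `⋆_n` and the
actions `σ̄` of (finite) permutations. -/
structure MergeOps (A : Type u) where
  star : ℕ → A → A → A
  bar : Equiv.Perm ℕ → A → A

namespace MergeOps

variable {A : Type u}

/-- `chain g k = ((g 0 ⋆_1 g 1) ⋆_2 g 2) … ⋆_k (g k)`. -/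
def chain (M : MergeOps A) (g : ℕ → A) : ℕ → A
  | 0 => g 0
  | i + 1 => M.star (i + 1) (M.chain g i) (g (i + 1))

/-- `chainStar g k y = ((…(g 0 ⋆_1 g 1) ⋆_2 …) ⋆_{k-1} g (k-1)) ⋆_k y`. -/
def chainStar (M : MergeOps A) (g : ℕ → A) (k : ℕ) (y : A) : A :=
  match k with
  | 0 => y
  | k + 1 => M.star (k + 1) (M.chain g k) y

/-- The `n`-coordinate of `x` relative to the coordinator `pt`:
`x[n] = τ̄^n_0(x) ⋆_1 pt`. -/
def coord (M : MergeOps A) (pt x : A) (n : ℕ) : A :=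
  M.star 1 (M.bar (Equiv.swap 0 n) x) pt

end MergeOps

/-- A merge algebra: operations `⋆_n` and `σ̄` satisfying axioms (B1)–(B7). -/
structure MergeAlgebra (A : Type u) extends MergeOps A where
  /-- (B1) each `⋆_n` is associative -/
  star_assoc : ∀ (n : ℕ) (x y z : A), star n (star n x y) z = star n x (star n y z)
  /-- (B1) each `⋆_n` is idempotent -/
  star_idem : ∀ (n : ℕ) (x : A), star n x x = x
  /-- (B2) -/
  star_zero : ∀ x y : A, star 0 x y = y
  /-- (B3), first part (k ≥ n) -/
  B3a : ∀ {n k : ℕ}, n ≤ k → ∀ x y z : A, star n (star k x y) z = star n x z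
  /-- (B3), second part (k ≥ n) -/
  B3b : ∀ {n k : ℕ}, n ≤ k → ∀ x y z : A, star k x (star n y z) = star k x z
  /-- (B4) (k < n) -/
  B4 : ∀ {n k : ℕ}, k < n → ∀ x y z : A, star n (star k x y) z = star k x (star n y z)
  /-- (B5) `σ̄(τ̄(x)) = (τ∘σ)‾(x)` -/
  B5 : ∀ σ τ : Equiv.Perm ℕ, FinPerm σ → FinPerm τ → ∀ x : A,
      bar σ (bar τ x) = bar (τ * σ) x
  /-- (B5) `ῑ(x) = x` -/
  bar_id : ∀ x : A, bar 1 x = x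
  /-- (B6): for `n ≤ k` and `σ` a permutation of `k`, with `f i = x` iff `σ i < n`:
  `σ̄(x ⋆_n y) = ((…(σ̄(f 0) ⋆_1 σ̄(f 1)) ⋆_2 …) ⋆_{k-1} σ̄(f (k-1))) ⋆_k y`. -/
  B6 : ∀ {n k : ℕ}, n ≤ k → ∀ σ : Equiv.Perm ℕ, (∀ i, k ≤ i → σ i = i) →
      ∀ x y : A, bar σ (star n x y) =
        toMergeOps.chainStar (fun i => bar σ (if σ i < n then x else y)) k y
  /-- (B7) -/
  B7 : ∀ {m n : ℕ} (σ τ : Equiv.Perm ℕ), FinPerm σ → FinPerm τ →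
      (∀ i, m ≤ i → i < n → σ i = τ i) →
      ∀ x y z : A, star n (star m z (bar σ x)) y = star n (star m z (bar τ x)) y

/-- An m-monoid: a monoid structure together with a merge algebra structure on
the same carrier, satisfying right distributivity (L1). -/
structure MMonoid (A : Type u) extends MergeAlgebra A where
  mul : A → A → A
  one : A
  mul_assoc : ∀ x y z : A, mul (mul x y) z = mul x (mul y z)
  one_mul : ∀ x : A, mul one x = x
  mul_one : ∀ x : A, mul x one = x
  /-- (L1) right distributivity -/
  L1 : ∀ (n : ℕ) (x y z : A), mul (star n x y) z = star n (mul x z) (mul y z)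

namespace MMonoid

variable {A : Type u} (M : MMonoid A)

/-- A cm-monoid is an m-monoid satisfying (L2): `σ̄(x)·y = σ̄(x·y)`. -/
def IsCM : Prop :=
  ∀ σ : Equiv.Perm ℕ, FinPerm σ → ∀ x y : A, M.mul (M.bar σ x) y = M.bar σ (M.mul x y)

/-- An am-monoid is an m-monoid satisfying (L3): `σ̄(x·y) = σ̄(x)·σ̄(y)`. -/
def IsAM : Prop :=
  ∀ σ : Equiv.Perm ℕ, FinPerm σ → ∀ x y : A, M.bar σ (M.mul x y) = M.mul (M.bar σ x) (M.bar σ y)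

/-- The `n`-coordinate `x[n] = τ̄^n_0(x) ⋆_1 1` (the coordinator is the unit). -/
def coord (x : A) (n : ℕ) : A := M.toMergeOps.coord M.one x n

/-- Extensionality: elements with the same coordinates are equal. -/
def Extensional : Prop := ∀ x y : A, (∀ n : ℕ, M.coord x n = M.coord y n) → x = y

/-- An element has rank ≤ n iff `x ⋆_n 1 = x`; the m-monoid is finitely ranked
if every element has finite rank. -/
def FinitelyRanked : Prop := ∀ x : A, ∃ n : ℕ, M.star n x M.one = x

/-- A degenerate m-monoid. -/
def Degenerate : Prop :=
  (∀ σ : Equiv.Perm ℕ, FinPerm σ → ∀ x : A, M.bar σ x = x) ∧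
    (∀ (n : ℕ) (x y : A), M.star n x y = y)

/-- `a` is finite dimensional: for every `n` there is `m` with
`(a·(1 ⋆_m b ⋆_{m+k} 1)) ⋆_n a = a` for all `b` and `k`. -/
def FinDimEl (a : A) : Prop :=
  ∀ n : ℕ, ∃ m : ℕ, ∀ (b : A) (k : ℕ),
    M.star n (M.mul a (M.star (m + k) (M.star m M.one b) M.one)) a = a

/-- `a` is ω-finite dimensional: for every `n` there is `m` with
`(a·(1 ⋆_m b)) ⋆_n a = a` for all `b`. -/
def OmegaFinDimEl (a : A) : Prop :=
  ∀ n : ℕ, ∃ m : ℕ, ∀ b : A,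
    M.star n (M.mul a (M.star m M.one b)) a = a

/-- An m-monoid is finite dimensional if every element is. -/
def FinDim : Prop := ∀ a : A, M.FinDimEl a

/-- An m-monoid is ω-finite dimensional if every element is. -/
def OmegaFinDim : Prop := ∀ a : A, M.OmegaFinDimEl a

end MMonoid

/-!
The two conditions differ only in their test elements, `1 ⋆_m b ⋆_{m+k} 1` versus `1 ⋆_m b`.
By (B3) and (B4) every `1 ⋆_m b ⋆_{m+k} 1` is of the form `1 ⋆_m c`; conversely, if `b` has
rank `r`, then `1 ⋆_m b = 1 ⋆_m b ⋆_{m+r+1} 1`.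
-/

namespace MergeAlgebra

variable {A : Type u} (M : MergeAlgebra A)

theorem exists_star_star_add_eq_star (m k : ℕ) (x y z : A) :
    ∃ c, M.star (m + k) (M.star m x y) z = M.star m x c := by
  rcases k with _ | k
  · exact ⟨z, M.B3a le_rfl x y z⟩
  · exact ⟨M.star (m + (k + 1)) y z, M.B4 (by omega) x y z⟩

theorem star_eq_self_of_le {r p : ℕ} (hrp : r ≤ p) {x e : A} (hx : M.star r x e = x) :
    M.star p x e = x := by
  rcases hrp.eq_or_lt with rfl | hlt
  · exact hx
  · calc M.star p x e = M.star p (M.star r x e) e := by rw [hx]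
      _ = M.star r x e := by rw [M.B4 hlt, M.star_idem]
      _ = x := hx

end MergeAlgebra

namespace MMonoid

variable {A : Type u} {M : MMonoid A} {a : A}

theorem OmegaFinDimEl.finDimEl (h : M.OmegaFinDimEl a) : M.FinDimEl a := by
  intro n
  obtain ⟨m, hm⟩ := h n
  refine ⟨m, fun b k => ?_⟩
  obtain ⟨c, hc⟩ := M.exists_star_star_add_eq_star m k M.one b M.one
  rw [hc]
  exact hm c

theorem FinDimEl.omegaFinDimEl (hfr : M.FinitelyRanked) (h : M.FinDimEl a) :
    M.OmegaFinDimEl a := by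
  intro n
  obtain ⟨m, hm⟩ := h n
  refine ⟨m, fun b => ?_⟩
  obtain ⟨r, hr⟩ := hfr b
  have hb : M.star (m + (r + 1)) (M.star m M.one b) M.one = M.star m M.one b := by
    rw [M.B4 (by omega), M.star_eq_self_of_le (by omega) hr]
  simpa only [hb] using hm b (r + 1)

end MMonoid

/-- STATEMENT 14: in a finitely ranked m-monoid, the ω-finite dimensional
elements are exactly the finite dimensional elements. -/
theorem finitely_ranked_omegaFinDim_eq_finDim {A : Type u} (M : MMonoid A)
    (hfr : M.FinitelyRanked) :
    ∀ a : A, M.OmegaFinDimEl a ↔ M.FinDimEl a :=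
  fun _ => ⟨MMonoid.OmegaFinDimEl.finDimEl, MMonoid.FinDimEl.omegaFinDimEl hfr⟩
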